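/- arXiv:2512.07096 — 3 statements merged into one kernel-verified Lean document; each statement's English description precedes it below -/
import Mathlib

section
/- For the velocity field v of the unit-square vortex patch, there is a constant C > 0 such that for all x, y in R^2 both lying outside the concentric triple 3Q_0 of the unit square, |v(x) - v(y)| ≤ C|x-y| / ((1+|x|)(1+|y|)). -/
open MeasureTheory Real Filter

noncomputable section

abbrev E2 := EuclideanSpace ℝ (Fin 2)

/-- The Biot–Savart kernel `K(z) = z^⊥ / (2π |z|^2)`. -/
def K (z : E2) : E2 := (1 / (2 * Real.pi * ‖z‖ ^ 2)) • (WithLp.toLp 2 ![-(z 1), z 0] : E2)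

/-- The unit square `Q_0 = [0,1)^2`. -/
def Q0 : Set E2 := {y | y 0 ∈ Set.Ico (0 : ℝ) 1 ∧ y 1 ∈ Set.Ico (0 : ℝ) 1}

/-- The concentric triple `3Q_0` of the unit square (side 3, same center). -/
def threeQ0 : Set E2 := {y | y 0 ∈ Set.Icc (-1 : ℝ) 2 ∧ y 1 ∈ Set.Icc (-1 : ℝ) 2}

/-- The velocity field of the unit-square vortex patch. -/
def v (x : E2) : E2 := ∫ y in Q0, K (x - y)

/-- Embedding of the lattice `ℤ²` into the plane. -/
def latt (n : ℤ × ℤ) : E2 := (WithLp.toLp 2 ![(n.1 : ℝ), (n.2 : ℝ)] : E2)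

/-- `ln⁻ t = -min{0, ln t} = max{0, -ln t}`. -/
def lnNeg (t : ℝ) : ℝ := max 0 (-Real.log t)

end


/-!
Up to the rotation `z ↦ z^⊥` and the factor `1 / 2π`, the kernel `K` is the inversion
`z ↦ z / ‖z‖²`, which multiplies distances by `1 / (‖a‖ ‖b‖)`; hence
`‖K a - K b‖ = ‖a - b‖ / (2π ‖a‖ ‖b‖)` exactly. For `w ∈ Q_0` and `x ∉ 3Q_0` one has
`‖x - w‖ ≥ max 1 (‖x‖ - 2) ≥ (1 + ‖x‖) / 4`, so integrating the kernel difference over the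
square of unit area gives the bound with `C = 8 / π`.
-/

def perp : E2 →ₗᵢ[ℝ] E2 where
  toFun z := WithLp.toLp 2 ![-(z 1), z 0]
  map_add' a b := by ext i; fin_cases i <;> simp; ring
  map_smul' c z := by ext i; fin_cases i <;> simp
  norm_map' z := by
    simp only [EuclideanSpace.norm_eq, Fin.sum_univ_two, Real.norm_eq_abs, sq_abs]
    simp [add_comm]

lemma K_eq_smul_perp (z : E2) : K z = (1 / (2 * π * ‖z‖ ^ 2)) • perp z := rfl

lemma norm_K (z : E2) : ‖K z‖ = (2 * π * ‖z‖)⁻¹ := by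
  rw [K_eq_smul_perp, norm_smul, perp.norm_map, Real.norm_of_nonneg (by positivity)]
  rcases eq_or_ne ‖z‖ 0 with hz | hz
  · simp [hz]
  · field_simp

lemma norm_K_sub_K {a b : E2} (ha : a ≠ 0) (hb : b ≠ 0) :
    ‖K a - K b‖ = ‖a - b‖ / (2 * π * ‖a‖ * ‖b‖) := by
  have hK : ∀ z : E2, K z = (2 * π)⁻¹ • perp ((1 / ‖z‖) ^ 2 • z) := fun z => by
    rw [K_eq_smul_perp, perp.map_smul, smul_smul]
    congr 1
    field_simp
  rw [hK, hK, ← smul_sub, ← perp.map_sub, norm_smul, perp.norm_map, ← dist_eq_norm,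
    dist_div_norm_sq_smul ha hb, dist_eq_norm, Real.norm_of_nonneg (by positivity)]
  field_simp

lemma norm_le_two_of_mem_Q0 {w : E2} (hw : w ∈ Q0) : ‖w‖ ≤ 2 := by
  obtain ⟨⟨h0, h0'⟩, ⟨h1, h1'⟩⟩ := hw
  have hsq : ‖w‖ ^ 2 ≤ 2 ^ 2 := by
    rw [EuclideanSpace.real_norm_sq_eq, Fin.sum_univ_two]
    nlinarith
  exact le_of_sq_le_sq hsq (by norm_num)

lemma one_le_norm_sub_of_mem_Q0 {x w : E2} (hx : x ∉ threeQ0) (hw : w ∈ Q0) : 1 ≤ ‖x - w‖ := by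
  have hcoord : ∀ i, x i ∉ Set.Icc (-1 : ℝ) 2 → w i ∈ Set.Ico (0 : ℝ) 1 → 1 ≤ ‖x - w‖ :=
    fun i hxi hwi => by
      refine le_trans ?_ (PiLp.norm_apply_le (x - w) i)
      rw [PiLp.sub_apply, Real.norm_eq_abs, le_abs]
      simp only [Set.mem_Icc, not_and_or, not_le] at hxi
      obtain ⟨hwi₀, hwi₁⟩ := hwi
      rcases hxi with h | h
      · right; linarith
      · left; linarith
  by_cases hx0 : x 0 ∈ Set.Icc (-1 : ℝ) 2
  · exact hcoord 1 (fun hx1 => hx ⟨hx0, hx1⟩) hw.2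
  · exact hcoord 0 hx0 hw.1

lemma one_add_norm_div_four_le_norm_sub {x w : E2} (hx : x ∉ threeQ0) (hw : w ∈ Q0) :
    (1 + ‖x‖) / 4 ≤ ‖x - w‖ := by
  have h₁ := one_le_norm_sub_of_mem_Q0 hx hw
  have h₂ : ‖x‖ - 2 ≤ ‖x - w‖ := by
    linarith [norm_sub_norm_le x w, norm_le_two_of_mem_Q0 hw]
  rcases le_total ‖x‖ 3 with h | h <;> linarith

lemma norm_K_sub_K_sub_le {x y w : E2} (hx : x ∉ threeQ0) (hy : y ∉ threeQ0) (hw : w ∈ Q0) :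
    ‖K (x - w) - K (y - w)‖ ≤ 8 / π * ‖x - y‖ / ((1 + ‖x‖) * (1 + ‖y‖)) := by
  have hxw := one_add_norm_div_four_le_norm_sub hx hw
  have hyw := one_add_norm_div_four_le_norm_sub hy hw
  have hxw₀ : x - w ≠ 0 := norm_pos_iff.mp (by linarith [norm_nonneg x])
  have hyw₀ : y - w ≠ 0 := norm_pos_iff.mp (by linarith [norm_nonneg y])
  rw [norm_K_sub_K hxw₀ hyw₀, sub_sub_sub_cancel_right]
  calc ‖x - y‖ / (2 * π * ‖x - w‖ * ‖y - w‖)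
      ≤ ‖x - y‖ / (2 * π * ((1 + ‖x‖) / 4) * ((1 + ‖y‖) / 4)) := by gcongr
    _ = 8 / π * ‖x - y‖ / ((1 + ‖x‖) * (1 + ‖y‖)) := by
      field_simp
      ring

lemma measurable_K : Measurable K := by
  unfold K
  fun_prop

lemma measurableSet_Q0 : MeasurableSet Q0 := by
  unfold Q0
  measurability

lemma volume_Q0 : volume Q0 = 1 := by
  have hQ : Q0 = (MeasurableEquiv.toLp 2 (Fin 2 → ℝ)).symm ⁻¹' Set.univ.pi fun _ => Set.Ico 0 1 := by
    ext y
    simp [Q0, Set.mem_pi, Fin.forall_fin_two]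
  rw [hQ, (EuclideanSpace.volume_preserving_symm_measurableEquiv_toLp (Fin 2)).measure_preimage
    (MeasurableSet.univ_pi fun _ => measurableSet_Ico).nullMeasurableSet, volume_pi_pi]
  simp

lemma integrableOn_K_sub {x : E2} (hx : x ∉ threeQ0) : IntegrableOn (fun w => K (x - w)) Q0 := by
  refine Measure.integrableOn_of_bounded (M := (2 * π)⁻¹) (by simp [volume_Q0])
    (measurable_K.comp (measurable_const.sub measurable_id)).aestronglyMeasurable
    (ae_restrict_of_forall_mem measurableSet_Q0 fun w hw => ?_)
  rw [norm_K]
  exact inv_anti₀ (by positivity)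
    (le_mul_of_one_le_right (by positivity) (one_le_norm_sub_of_mem_Q0 hx hw))

theorem vortex_patch_lipschitz_far :
    ∃ C : ℝ, 0 < C ∧ ∀ x y : E2, x ∉ threeQ0 → y ∉ threeQ0 →
      ‖v x - v y‖ ≤ C * ‖x - y‖ / ((1 + ‖x‖) * (1 + ‖y‖)) := by
  refine ⟨8 / π, by positivity, fun x y hx hy => ?_⟩
  rw [v, v, ← integral_sub (integrableOn_K_sub hx) (integrableOn_K_sub hy)]
  calc ‖∫ w in Q0, K (x - w) - K (y - w)‖
      ≤ 8 / π * ‖x - y‖ / ((1 + ‖x‖) * (1 + ‖y‖)) * volume.real Q0 :=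
        norm_setIntegral_le_of_norm_le_const (by simp [volume_Q0])
          fun w hw => norm_K_sub_K_sub_le hx hy hw
    _ = 8 / π * ‖x - y‖ / ((1 + ‖x‖) * (1 + ‖y‖)) := by simp [measureReal_def, volume_Q0]
end

section
/- There exists a constant C such that for all x, y ∈ R^2, Σ_{n ∈ Z^2} 1/((1+|n-x|)^2 (1+|n-y|)^2) ≤ C ln(e + |x| + |y|) / (1 + |x-y|^2). -/
open MeasureTheory Real Filter

/-!
Write `a = |n - x|`, `b = |n - y|` and `d = |x - y|`, so that `a + b ≥ d`. Where `a ≤ d/2` we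
have `b ≥ d/2`, and the summand is at most `4 (1+d)⁻² (1+a)⁻²`; the lattice sum of `(1+a)⁻²` over
the disc `a ≤ d/2` is `O(log (e + d))`. Where both `a, b > d/2`, AM-GM bounds the summand by
`(1+a)⁻⁴ + (1+b)⁻⁴`, and the lattice sum of `(1+a)⁻⁴` over `a > d/2` is `O((1+d)⁻²)`.

Both lattice estimates are reduced to one-dimensional ones by summing along rows first, where
`∑ⱼ 1 / (A² + (1 + |j - t|)²) = O(1/A)`. A sum over `i ∈ ℤ` of a decreasing function of
`|i - t|` is compared, through `i ↦ |i - round t|`, with a sum over `ℕ` that either telescopes or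
is a harmonic sum.
-/

open Finset

lemma sum_sub_succ_le_of_antitone {g : ℕ → ℝ} (hg : Antitone g) (hg0 : ∀ k, 0 ≤ g k)
    (s : Finset ℕ) : ∑ k ∈ s, (g k - g (k + 1)) ≤ g 0 := by
  have hs : s ⊆ range (s.sup id + 1) := fun k hk =>
    mem_range.2 (Nat.lt_succ_of_le (le_sup (f := id) hk))
  calc ∑ k ∈ s, (g k - g (k + 1))
      ≤ ∑ k ∈ range (s.sup id + 1), (g k - g (k + 1)) :=
        sum_le_sum_of_subset_of_nonneg hs fun k _ _ => sub_nonneg.2 (hg k.le_succ)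
    _ = g 0 - g (s.sup id + 1) := sum_range_sub' g _
    _ ≤ g 0 := sub_le_self _ (hg0 _)

lemma sum_one_div_add_sq_le {b : ℝ} (hb : 1 ≤ b) (s : Finset ℕ) :
    ∑ k ∈ s, 1 / (b + k) ^ 2 ≤ 2 / b := by
  set g : ℕ → ℝ := fun k => 1 / (b + k)
  have hg : Antitone g := fun m n hmn => by
    have : (m : ℝ) ≤ n := by exact_mod_cast hmn
    dsimp only [g]; gcongr
  have hterm : ∀ k : ℕ, 1 / (b + k) ^ 2 ≤ 2 * (g k - g (k + 1)) := fun k => by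
    have hk : (0 : ℝ) ≤ k := k.cast_nonneg
    dsimp only [g]; push_cast
    rw [div_sub_div _ _ (by positivity) (by positivity), mul_div_assoc',
      div_le_div_iff₀ (by positivity) (by positivity)]
    nlinarith
  calc ∑ k ∈ s, 1 / (b + k) ^ 2 ≤ ∑ k ∈ s, 2 * (g k - g (k + 1)) :=
        sum_le_sum fun k _ => hterm k
    _ = 2 * ∑ k ∈ s, (g k - g (k + 1)) := (mul_sum ..).symm
    _ ≤ 2 * g 0 := by
        gcongr
        exact sum_sub_succ_le_of_antitone hg (fun k => by dsimp only [g]; positivity) s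
    _ = 2 / b := by simp [g, div_eq_mul_inv]

lemma sum_one_div_one_add_le_log {N : ℕ} (s : Finset ℕ) (hs : ∀ k ∈ s, k ≤ N) :
    ∑ k ∈ s, 1 / (1 + (k : ℝ)) ≤ 1 + log (N + 1) := by
  have hsub : s ⊆ range (N + 1) := fun k hk => mem_range.2 (Nat.lt_succ_of_le (hs k hk))
  calc ∑ k ∈ s, 1 / (1 + (k : ℝ)) ≤ ∑ k ∈ range (N + 1), 1 / (1 + (k : ℝ)) :=
        sum_le_sum_of_subset_of_nonneg hsub fun k _ _ => by positivity
    _ = harmonic (N + 1) := by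
        simp [harmonic, add_comm]
    _ ≤ 1 + log (N + 1) := by exact_mod_cast harmonic_le_one_add_log (N + 1)

lemma sum_natAbs_sub_le_two_mul (s : Finset ℤ) (c : ℤ) {g : ℕ → ℝ} (hg : ∀ k, 0 ≤ g k) :
    ∑ i ∈ s, g (i - c).natAbs ≤ 2 * ∑ k ∈ s.image fun i => (i - c).natAbs, g k := by
  rw [sum_comp, mul_sum]
  refine sum_le_sum fun k _ => ?_
  have hfib : {i ∈ s | (i - c).natAbs = k} ⊆ {c + k, c - k} := fun i hi => by
    have := (mem_filter.1 hi).2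
    simp only [mem_insert, mem_singleton]
    omega
  have hcard : #{i ∈ s | (i - c).natAbs = k} ≤ 2 :=
    (card_le_card hfib).trans card_le_two
  rw [nsmul_eq_mul]
  gcongr
  · exact hg k
  · exact_mod_cast hcard

lemma natAbs_sub_round_le (i : ℤ) (t : ℝ) :
    ((i - round t).natAbs : ℝ) ≤ |(i : ℝ) - t| + 1 / 2 := by
  rw [Nat.cast_natAbs, Int.cast_abs, Int.cast_sub]
  linarith [abs_sub_le (i : ℝ) t (round t), abs_sub_round t]

lemma one_le_log_exp_one_add {R : ℝ} (hR : 0 ≤ R) : 1 ≤ log (exp 1 + R) :=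
  (le_log_iff_exp_le (by positivity)).2 (by linarith)

lemma sum_one_div_add_abs_sub_sq_le {b : ℝ} (hb : 1 ≤ b) (s : Finset ℤ) (t : ℝ) :
    ∑ i ∈ s, 1 / (b + |(i : ℝ) - t|) ^ 2 ≤ 16 / b := by
  have hterm : ∀ i : ℤ,
      1 / (b + |(i : ℝ) - t|) ^ 2 ≤ 4 * (1 / (b + ((i - round t).natAbs : ℝ)) ^ 2) := by
    intro i
    have hr := natAbs_sub_round_le i t
    have hk : (0 : ℝ) ≤ (i - round t).natAbs := Nat.cast_nonneg _
    rw [mul_one_div, div_le_div_iff₀ (by positivity) (by positivity)]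
    nlinarith [abs_nonneg ((i : ℝ) - t)]
  calc ∑ i ∈ s, 1 / (b + |(i : ℝ) - t|) ^ 2
      ≤ ∑ i ∈ s, 4 * (1 / (b + ((i - round t).natAbs : ℝ)) ^ 2) := sum_le_sum fun i _ => hterm i
    _ = 4 * ∑ i ∈ s, 1 / (b + ((i - round t).natAbs : ℝ)) ^ 2 := (mul_sum ..).symm
    _ ≤ 4 * (2 * ∑ k ∈ s.image fun i => (i - round t).natAbs, 1 / (b + k) ^ 2) := by
        gcongr
        exact sum_natAbs_sub_le_two_mul s (round t) (g := fun k => 1 / (b + k) ^ 2)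
          fun k => by positivity
    _ ≤ 4 * (2 * (2 / b)) := by gcongr; exact sum_one_div_add_sq_le hb _
    _ = 16 / b := by ring

lemma sum_one_div_one_add_abs_sub_le_log {R : ℝ} (hR : 0 ≤ R) (s : Finset ℤ) (t : ℝ)
    (hs : ∀ i ∈ s, |(i : ℝ) - t| ≤ R) :
    ∑ i ∈ s, 1 / (1 + |(i : ℝ) - t|) ≤ 8 * log (exp 1 + R) := by
  have hterm : ∀ i : ℤ,
      1 / (1 + |(i : ℝ) - t|) ≤ 2 * (1 / (1 + ((i - round t).natAbs : ℝ))) := by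
    intro i
    have hr := natAbs_sub_round_le i t
    rw [mul_one_div, div_le_div_iff₀ (by positivity) (by positivity)]
    linarith [abs_nonneg ((i : ℝ) - t)]
  have hmem : ∀ k ∈ s.image fun i => (i - round t).natAbs, k ≤ ⌈R⌉₊ := by
    simp only [mem_image, forall_exists_index, and_imp]
    rintro _ i hi rfl
    have hr := natAbs_sub_round_le i t
    have : ((i - round t).natAbs : ℝ) < ⌈R⌉₊ + 1 := by linarith [hs i hi, Nat.le_ceil R]
    exact_mod_cast Nat.lt_succ_iff.1 (by exact_mod_cast this)
  have hlog : 1 + log (⌈R⌉₊ + 1) ≤ 2 * log (exp 1 + R) := by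
    have h1 := one_le_log_exp_one_add hR
    have h2 : log (⌈R⌉₊ + 1) ≤ log (exp 1 + R) :=
      log_le_log (by positivity) (by linarith [Nat.ceil_lt_add_one hR, exp_one_gt_two])
    linarith
  calc ∑ i ∈ s, 1 / (1 + |(i : ℝ) - t|)
      ≤ ∑ i ∈ s, 2 * (1 / (1 + ((i - round t).natAbs : ℝ))) := sum_le_sum fun i _ => hterm i
    _ = 2 * ∑ i ∈ s, 1 / (1 + ((i - round t).natAbs : ℝ)) := (mul_sum ..).symm
    _ ≤ 2 * (2 * ∑ k ∈ s.image fun i => (i - round t).natAbs, 1 / (1 + (k : ℝ))) := by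
        gcongr
        exact sum_natAbs_sub_le_two_mul s (round t) (g := fun k => 1 / (1 + k))
          fun k => by positivity
    _ ≤ 2 * (2 * (2 * log (exp 1 + R))) := by
        gcongr; exact (sum_one_div_one_add_le_log _ hmem).trans hlog
    _ = 8 * log (exp 1 + R) := by ring

lemma sum_one_div_sq_add_one_add_abs_sub_sq_le {A : ℝ} (hA : 0 ≤ A) (s : Finset ℤ) (t : ℝ) :
    ∑ j ∈ s, 1 / (A ^ 2 + (1 + |(j : ℝ) - t|) ^ 2) ≤ 32 / (1 + A) := by
  have hterm : ∀ j : ℤ,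
      1 / (A ^ 2 + (1 + |(j : ℝ) - t|) ^ 2) ≤ 2 * (1 / ((1 + A) + |(j : ℝ) - t|) ^ 2) := by
    intro j
    rw [mul_one_div, div_le_div_iff₀ (by positivity) (by positivity)]
    nlinarith [sq_nonneg (A - 1 - |(j : ℝ) - t|)]
  calc ∑ j ∈ s, 1 / (A ^ 2 + (1 + |(j : ℝ) - t|) ^ 2)
      ≤ ∑ j ∈ s, 2 * (1 / ((1 + A) + |(j : ℝ) - t|) ^ 2) := sum_le_sum fun j _ => hterm j
    _ = 2 * ∑ j ∈ s, 1 / ((1 + A) + |(j : ℝ) - t|) ^ 2 := (mul_sum ..).symm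
    _ ≤ 2 * (16 / (1 + A)) := by
        gcongr; exact sum_one_div_add_abs_sub_sq_le (by linarith) s t
    _ = 32 / (1 + A) := by ring

lemma sum_one_div_one_add_abs_sub_cube_le {ρ : ℝ} (hρ : 0 ≤ ρ) (s : Finset ℤ) (t : ℝ)
    (hs : ∀ i ∈ s, ρ ≤ |(i : ℝ) - t|) :
    ∑ i ∈ s, 1 / (1 + |(i : ℝ) - t|) ^ 3 ≤ 64 / (1 + ρ) ^ 2 := by
  have hterm : ∀ i ∈ s, 1 / (1 + |(i : ℝ) - t|) ^ 3
      ≤ 4 / (1 + ρ) * (1 / ((1 + ρ) + |(i : ℝ) - t|) ^ 2) := by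
    intro i hi
    have hρi : 1 + ρ ≤ 1 + |(i : ℝ) - t| := by linarith [hs i hi]
    have h2 : 1 + ρ + |(i : ℝ) - t| ≤ 2 * (1 + |(i : ℝ) - t|) := by linarith
    rw [div_mul_div_comm, div_le_div_iff₀ (by positivity) (by positivity)]
    calc 1 * ((1 + ρ) * (1 + ρ + |(i : ℝ) - t|) ^ 2)
        ≤ (1 + |(i : ℝ) - t|) * (2 * (1 + |(i : ℝ) - t|)) ^ 2 := by rw [one_mul]; gcongr
      _ = 4 * 1 * (1 + |(i : ℝ) - t|) ^ 3 := by ring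
  calc ∑ i ∈ s, 1 / (1 + |(i : ℝ) - t|) ^ 3
      ≤ ∑ i ∈ s, 4 / (1 + ρ) * (1 / ((1 + ρ) + |(i : ℝ) - t|) ^ 2) := sum_le_sum hterm
    _ = 4 / (1 + ρ) * ∑ i ∈ s, 1 / ((1 + ρ) + |(i : ℝ) - t|) ^ 2 := (mul_sum ..).symm
    _ ≤ 4 / (1 + ρ) * (16 / (1 + ρ)) := by
        gcongr; exact sum_one_div_add_abs_sub_sq_le (by linarith) s t
    _ = 64 / (1 + ρ) ^ 2 := by rw [div_mul_div_comm]; ring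

lemma sum_le_sum_image_fst_of_sum_row_le {α β : Type*} [DecidableEq α] [DecidableEq β]
    (s : Finset (α × β)) {F : α × β → ℝ} (hF : ∀ n, 0 ≤ F n) {g : α → ℝ}
    (hg : ∀ i (J : Finset β), ∑ j ∈ J, F (i, j) ≤ g i) :
    ∑ n ∈ s, F n ≤ ∑ i ∈ s.image Prod.fst, g i := by
  have hs : s ⊆ s.image Prod.fst ×ˢ s.image Prod.snd := fun n hn =>
    mem_product.2 ⟨mem_image_of_mem _ hn, mem_image_of_mem _ hn⟩
  calc ∑ n ∈ s, F n ≤ ∑ n ∈ s.image Prod.fst ×ˢ s.image Prod.snd, F n :=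
        sum_le_sum_of_subset_of_nonneg hs fun n _ _ => hF n
    _ = ∑ i ∈ s.image Prod.fst, ∑ j ∈ s.image Prod.snd, F (i, j) := sum_product ..
    _ ≤ ∑ i ∈ s.image Prod.fst, g i := sum_le_sum fun i _ => hg i _

lemma sum_one_div_sq_add_sq_le_log_of_fst_le {R : ℝ} (hR : 0 ≤ R) (s : Finset (ℤ × ℤ)) (t₁ t₂ : ℝ)
    (hs : ∀ n ∈ s, |(n.1 : ℝ) - t₁| ≤ R) :
    ∑ n ∈ s, 1 / ((1 + |(n.1 : ℝ) - t₁|) ^ 2 + (1 + |(n.2 : ℝ) - t₂|) ^ 2)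
      ≤ 256 * log (exp 1 + R) := by
  have hrow : ∀ (i : ℤ) (J : Finset ℤ),
      ∑ j ∈ J, 1 / ((1 + |(i : ℝ) - t₁|) ^ 2 + (1 + |(j : ℝ) - t₂|) ^ 2)
        ≤ 32 * (1 / (1 + |(i : ℝ) - t₁|)) := fun i J => by
    refine (sum_one_div_sq_add_one_add_abs_sub_sq_le (by positivity) J t₂).trans ?_
    rw [mul_one_div]
    gcongr
    linarith
  have hfst : ∀ i ∈ s.image Prod.fst, |(i : ℝ) - t₁| ≤ R := by
    simp only [mem_image]
    rintro _ ⟨n, hn, rfl⟩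
    exact hs n hn
  calc _ ≤ ∑ i ∈ s.image Prod.fst, 32 * (1 / (1 + |(i : ℝ) - t₁|)) :=
        sum_le_sum_image_fst_of_sum_row_le s (fun n => by positivity) hrow
    _ = 32 * ∑ i ∈ s.image Prod.fst, 1 / (1 + |(i : ℝ) - t₁|) := (mul_sum ..).symm
    _ ≤ 32 * (8 * log (exp 1 + R)) := by
        gcongr; exact sum_one_div_one_add_abs_sub_le_log hR _ t₁ hfst
    _ = 256 * log (exp 1 + R) := by ring

lemma sum_one_div_sq_mul_sq_add_sq_le_of_le_fst {ρ : ℝ} (hρ : 0 ≤ ρ) (s : Finset (ℤ × ℤ)) (t₁ t₂ : ℝ)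
    (hs : ∀ n ∈ s, ρ ≤ |(n.1 : ℝ) - t₁|) :
    ∑ n ∈ s, 1 / ((1 + |(n.1 : ℝ) - t₁|) ^ 2 *
        ((1 + |(n.1 : ℝ) - t₁|) ^ 2 + (1 + |(n.2 : ℝ) - t₂|) ^ 2))
      ≤ 2048 / (1 + ρ) ^ 2 := by
  have hrow : ∀ (i : ℤ) (J : Finset ℤ),
      ∑ j ∈ J, 1 / ((1 + |(i : ℝ) - t₁|) ^ 2 *
        ((1 + |(i : ℝ) - t₁|) ^ 2 + (1 + |(j : ℝ) - t₂|) ^ 2))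
        ≤ 32 * (1 / (1 + |(i : ℝ) - t₁|) ^ 3) := fun i J => by
    set A := 1 + |(i : ℝ) - t₁|
    have hA : 1 ≤ A := le_add_of_nonneg_right (abs_nonneg _)
    calc ∑ j ∈ J, 1 / (A ^ 2 * (A ^ 2 + (1 + |(j : ℝ) - t₂|) ^ 2))
        = 1 / A ^ 2 * ∑ j ∈ J, 1 / (A ^ 2 + (1 + |(j : ℝ) - t₂|) ^ 2) := by
          rw [mul_sum]; simp_rw [one_div_mul_one_div]
      _ ≤ 1 / A ^ 2 * (32 / (1 + A)) := by
          gcongr; exact sum_one_div_sq_add_one_add_abs_sub_sq_le (by linarith) J t₂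
      _ ≤ 1 / A ^ 2 * (32 / A) := by gcongr; linarith
      _ = 32 * (1 / A ^ 3) := by field_simp
  have hfst : ∀ i ∈ s.image Prod.fst, ρ ≤ |(i : ℝ) - t₁| := by
    simp only [mem_image]
    rintro _ ⟨n, hn, rfl⟩
    exact hs n hn
  calc _ ≤ ∑ i ∈ s.image Prod.fst, 32 * (1 / (1 + |(i : ℝ) - t₁|) ^ 3) :=
        sum_le_sum_image_fst_of_sum_row_le s (fun n => by positivity) hrow
    _ = 32 * ∑ i ∈ s.image Prod.fst, 1 / (1 + |(i : ℝ) - t₁|) ^ 3 := (mul_sum ..).symm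
    _ ≤ 32 * (64 / (1 + ρ) ^ 2) := by
        gcongr; exact sum_one_div_one_add_abs_sub_cube_le hρ _ t₁ hfst
    _ = 2048 / (1 + ρ) ^ 2 := by ring

lemma latt_sub_apply_zero (n : ℤ × ℤ) (x : E2) : (latt n - x) 0 = n.1 - x 0 := by
  simp [latt]

lemma latt_sub_apply_one (n : ℤ × ℤ) (x : E2) : (latt n - x) 1 = n.2 - x 1 := by
  simp [latt]

lemma norm_latt_sub_sq (n : ℤ × ℤ) (x : E2) :
    ‖latt n - x‖ ^ 2 = |(n.1 : ℝ) - x 0| ^ 2 + |(n.2 : ℝ) - x 1| ^ 2 := by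
  rw [EuclideanSpace.real_norm_sq_eq, Fin.sum_univ_two, latt_sub_apply_zero,
    latt_sub_apply_one, sq_abs, sq_abs]

lemma le_of_sq_eq_add_sq {u w r : ℝ} (hu : 0 ≤ u) (hr : 0 ≤ r) (h : r ^ 2 = u ^ 2 + w ^ 2) :
    u ≤ r :=
  (pow_le_pow_iff_left₀ hu hr two_ne_zero).1 (by nlinarith)

section Pythagorean

variable {u w r : ℝ} (hu : 0 ≤ u) (hw : 0 ≤ w) (hr : 0 ≤ r) (h : r ^ 2 = u ^ 2 + w ^ 2)
include hu hw hr h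

lemma le_add_of_sq_eq_add_sq : r ≤ u + w :=
  (pow_le_pow_iff_left₀ hr (by positivity) two_ne_zero).1 (by nlinarith)

lemma one_div_one_add_sq_le_of_sq_eq_add_sq :
    1 / (1 + r) ^ 2 ≤ 2 * (1 / ((1 + u) ^ 2 + (1 + w) ^ 2)) := by
  have hur := le_of_sq_eq_add_sq hu hr h
  have hwr := le_of_sq_eq_add_sq (w := u) hw hr (by linarith)
  rw [mul_one_div, div_le_div_iff₀ (by positivity) (by positivity)]
  nlinarith

lemma one_div_one_add_pow_four_le_of_sq_eq_add_sq :
    1 / (1 + r) ^ 4 ≤ 2 * (1 / ((1 + u) ^ 2 * ((1 + u) ^ 2 + (1 + w) ^ 2))) := by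
  have hur := le_of_sq_eq_add_sq hu hr h
  calc 1 / (1 + r) ^ 4 = 1 / (1 + r) ^ 2 * (1 / (1 + r) ^ 2) := by field_simp
    _ ≤ 1 / (1 + u) ^ 2 * (2 * (1 / ((1 + u) ^ 2 + (1 + w) ^ 2))) := by
        gcongr
        exact one_div_one_add_sq_le_of_sq_eq_add_sq hu hw hr h
    _ = 2 * (1 / ((1 + u) ^ 2 * ((1 + u) ^ 2 + (1 + w) ^ 2))) := by field_simp

end Pythagorean


lemma abs_fst_sub_le_norm_latt_sub (n : ℤ × ℤ) (x : E2) : |(n.1 : ℝ) - x 0| ≤ ‖latt n - x‖ :=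
  le_of_sq_eq_add_sq (abs_nonneg _) (norm_nonneg _) (norm_latt_sub_sq n x)

lemma norm_latt_swap_sub (n : ℤ × ℤ) (x : E2) :
    ‖latt n.swap - !₂[x 1, x 0]‖ = ‖latt n - x‖ := by
  rw [← sq_eq_sq₀ (norm_nonneg _) (norm_nonneg _), norm_latt_sub_sq, norm_latt_sub_sq]
  simp [add_comm]

lemma sum_one_div_one_add_norm_latt_sub_sq_le_log {R : ℝ} (hR : 0 ≤ R) (s : Finset (ℤ × ℤ))
    (x : E2) (hs : ∀ n ∈ s, ‖latt n - x‖ ≤ R) :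
    ∑ n ∈ s, 1 / (1 + ‖latt n - x‖) ^ 2 ≤ 512 * log (exp 1 + R) := by
  calc ∑ n ∈ s, 1 / (1 + ‖latt n - x‖) ^ 2
      ≤ ∑ n ∈ s, 2 * (1 / ((1 + |(n.1 : ℝ) - x 0|) ^ 2 + (1 + |(n.2 : ℝ) - x 1|) ^ 2)) :=
        sum_le_sum fun n _ => one_div_one_add_sq_le_of_sq_eq_add_sq (abs_nonneg _)
          (abs_nonneg _) (norm_nonneg _) (norm_latt_sub_sq n x)
    _ = 2 * ∑ n ∈ s, 1 / ((1 + |(n.1 : ℝ) - x 0|) ^ 2 + (1 + |(n.2 : ℝ) - x 1|) ^ 2) :=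
        (mul_sum ..).symm
    _ ≤ 2 * (256 * log (exp 1 + R)) := by
        gcongr
        exact sum_one_div_sq_add_sq_le_log_of_fst_le hR s _ _ fun n hn =>
          (abs_fst_sub_le_norm_latt_sub n x).trans (hs n hn)
    _ = 512 * log (exp 1 + R) := by ring

lemma sum_one_div_one_add_norm_latt_sub_pow_four_le_of_fst {ρ : ℝ} (hρ : 0 ≤ ρ)
    (s : Finset (ℤ × ℤ)) (x : E2) (hs : ∀ n ∈ s, ρ ≤ |(n.1 : ℝ) - x 0|) :
    ∑ n ∈ s, 1 / (1 + ‖latt n - x‖) ^ 4 ≤ 4096 / (1 + ρ) ^ 2 :=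
  calc ∑ n ∈ s, 1 / (1 + ‖latt n - x‖) ^ 4
      ≤ ∑ n ∈ s, 2 * (1 / ((1 + |(n.1 : ℝ) - x 0|) ^ 2 *
          ((1 + |(n.1 : ℝ) - x 0|) ^ 2 + (1 + |(n.2 : ℝ) - x 1|) ^ 2))) :=
        sum_le_sum fun n _ => one_div_one_add_pow_four_le_of_sq_eq_add_sq (abs_nonneg _)
          (abs_nonneg _) (norm_nonneg _) (norm_latt_sub_sq n x)
    _ = 2 * ∑ n ∈ s, 1 / ((1 + |(n.1 : ℝ) - x 0|) ^ 2 *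
          ((1 + |(n.1 : ℝ) - x 0|) ^ 2 + (1 + |(n.2 : ℝ) - x 1|) ^ 2)) := (mul_sum ..).symm
    _ ≤ 2 * (2048 / (1 + ρ) ^ 2) := by gcongr; exact sum_one_div_sq_mul_sq_add_sq_le_of_le_fst hρ s _ _ hs
    _ = 4096 / (1 + ρ) ^ 2 := by ring

lemma sum_one_div_one_add_norm_latt_sub_pow_four_le {R : ℝ} (hR : 0 ≤ R)
    (s : Finset (ℤ × ℤ)) (x : E2) (hs : ∀ n ∈ s, R ≤ ‖latt n - x‖) :
    ∑ n ∈ s, 1 / (1 + ‖latt n - x‖) ^ 4 ≤ 32768 / (1 + R) ^ 2 := by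
  have hR2 : 4096 / (1 + R / 2) ^ 2 ≤ 16384 / (1 + R) ^ 2 := by
    rw [div_le_div_iff₀ (by positivity) (by positivity)]; nlinarith
  have hfst : ∑ n ∈ s with R / 2 ≤ |(n.1 : ℝ) - x 0|, 1 / (1 + ‖latt n - x‖) ^ 4
      ≤ 16384 / (1 + R) ^ 2 :=
    (sum_one_div_one_add_norm_latt_sub_pow_four_le_of_fst (by positivity) _ x
      fun n hn => (mem_filter.1 hn).2).trans hR2
  -- Off the first case, the second coordinate is far; reflecting in the diagonal swaps the roles.
  have hsnd : ∑ n ∈ s with ¬R / 2 ≤ |(n.1 : ℝ) - x 0|, 1 / (1 + ‖latt n - x‖) ^ 4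
      ≤ 16384 / (1 + R) ^ 2 := by
    set s' := {n ∈ s | ¬R / 2 ≤ |(n.1 : ℝ) - x 0|}
    have hfar : ∀ m ∈ s'.image Prod.swap, R / 2 ≤ |(m.1 : ℝ) - (!₂[x 1, x 0] : E2) 0| := by
      simp only [mem_image]
      rintro _ ⟨n, hn, rfl⟩
      obtain ⟨hn, hnear⟩ := mem_filter.1 hn
      have := le_add_of_sq_eq_add_sq (abs_nonneg _) (abs_nonneg _) (norm_nonneg _)
        (norm_latt_sub_sq n x)
      have hw : R / 2 ≤ |(n.2 : ℝ) - x 1| := by linarith [hs n hn]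
      simpa using hw
    calc _ = ∑ m ∈ s'.image Prod.swap, 1 / (1 + ‖latt m - !₂[x 1, x 0]‖) ^ 4 := by
          rw [sum_image Prod.swap_injective.injOn]
          simp_rw [norm_latt_swap_sub]
      _ ≤ 16384 / (1 + R) ^ 2 :=
          (sum_one_div_one_add_norm_latt_sub_pow_four_le_of_fst (by positivity) _ _ hfar).trans hR2
  calc _ = _ + _ := (sum_filter_add_sum_filter_not s (fun n => R / 2 ≤ |(n.1 : ℝ) - x 0|) _).symm
    _ ≤ 16384 / (1 + R) ^ 2 + 16384 / (1 + R) ^ 2 := add_le_add hfst hsnd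
    _ = 32768 / (1 + R) ^ 2 := by ring

noncomputable def pairMajorant (d a : ℝ) : ℝ :=
  if a ≤ d / 2 then 4 / ((1 + d) ^ 2 * (1 + a) ^ 2) else 1 / (1 + a) ^ 4

lemma pairMajorant_nonneg (d : ℝ) {a : ℝ} (ha : 0 ≤ a) : 0 ≤ pairMajorant d a := by
  unfold pairMajorant
  split_ifs <;> positivity

lemma one_div_mul_le_pairMajorant_of_le {a b d : ℝ} (ha : 0 ≤ a) (hb : 0 ≤ b)
    (had : a ≤ d / 2) (hd : d ≤ a + b) :
    1 / ((1 + a) ^ 2 * (1 + b) ^ 2) ≤ pairMajorant d a := by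
  rw [pairMajorant, if_pos had]
  have hd0 : 0 ≤ d := by linarith
  have : (1 + d) ^ 2 ≤ (2 * (1 + b)) ^ 2 := by gcongr; linarith
  rw [div_le_div_iff₀ (by positivity) (by positivity)]
  nlinarith [sq_nonneg (1 + a)]

lemma one_div_mul_le_pairMajorant_add {a b d : ℝ} (ha : 0 ≤ a) (hb : 0 ≤ b)
    (hd : d ≤ a + b) :
    1 / ((1 + a) ^ 2 * (1 + b) ^ 2) ≤ pairMajorant d a + pairMajorant d b := by
  by_cases hna : a ≤ d / 2
  · linarith [one_div_mul_le_pairMajorant_of_le ha hb hna hd, pairMajorant_nonneg d hb]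
  by_cases hnb : b ≤ d / 2
  · rw [mul_comm]
    linarith [one_div_mul_le_pairMajorant_of_le hb ha hnb (by linarith),
      pairMajorant_nonneg d ha]
  rw [pairMajorant, pairMajorant, if_neg hna, if_neg hnb, ← one_div_mul_one_div]
  have hsq : ∀ c : ℝ, 1 / c ^ 4 = (1 / c ^ 2) ^ 2 := fun c => by ring
  rw [hsq, hsq]
  nlinarith [sq_nonneg (1 / (1 + a) ^ 2 - 1 / (1 + b) ^ 2)]

lemma sum_pairMajorant_norm_latt_sub_le {d : ℝ} (hd : 0 ≤ d) (s : Finset (ℤ × ℤ)) (x : E2) :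
    ∑ n ∈ s, pairMajorant d ‖latt n - x‖ ≤ 133120 * log (exp 1 + d) / (1 + d) ^ 2 := by
  have hlog : 1 ≤ log (exp 1 + d) := one_le_log_exp_one_add hd
  have hnear : ∑ n ∈ s with ‖latt n - x‖ ≤ d / 2, 4 / ((1 + d) ^ 2 * (1 + ‖latt n - x‖) ^ 2)
      ≤ 2048 * log (exp 1 + d) / (1 + d) ^ 2 := by
    have hlog' : log (exp 1 + d / 2) ≤ log (exp 1 + d) :=
      log_le_log (by positivity) (by linarith)
    calc _ = 4 / (1 + d) ^ 2 *
          ∑ n ∈ s with ‖latt n - x‖ ≤ d / 2, 1 / (1 + ‖latt n - x‖) ^ 2 := by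
          rw [mul_sum]; simp_rw [div_mul_div_comm, mul_one]
      _ ≤ 4 / (1 + d) ^ 2 * (512 * log (exp 1 + d / 2)) := by
          gcongr
          exact sum_one_div_one_add_norm_latt_sub_sq_le_log (by positivity) _ x
            fun n hn => (mem_filter.1 hn).2
      _ ≤ 4 / (1 + d) ^ 2 * (512 * log (exp 1 + d)) := by gcongr
      _ = 2048 * log (exp 1 + d) / (1 + d) ^ 2 := by ring
  have hfar : ∑ n ∈ s with ¬‖latt n - x‖ ≤ d / 2, 1 / (1 + ‖latt n - x‖) ^ 4
      ≤ 131072 * log (exp 1 + d) / (1 + d) ^ 2 := by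
    calc _ ≤ 32768 / (1 + d / 2) ^ 2 :=
          sum_one_div_one_add_norm_latt_sub_pow_four_le (by positivity) _ x
            fun n hn => (not_le.1 (mem_filter.1 hn).2).le
      _ ≤ 131072 / (1 + d) ^ 2 := by
          rw [div_le_div_iff₀ (by positivity) (by positivity)]; nlinarith
      _ ≤ 131072 * log (exp 1 + d) / (1 + d) ^ 2 := by gcongr; nlinarith
  unfold pairMajorant
  rw [sum_ite]
  calc _ ≤ 2048 * log (exp 1 + d) / (1 + d) ^ 2 + 131072 * log (exp 1 + d) / (1 + d) ^ 2 :=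
        add_le_add hnear hfar
    _ = 133120 * log (exp 1 + d) / (1 + d) ^ 2 := by ring

theorem lattice_sum_S_decay :
    ∃ C : ℝ, ∀ x y : E2,
      (∑' n : ℤ × ℤ, 1 / ((1 + ‖latt n - x‖) ^ 2 * (1 + ‖latt n - y‖) ^ 2)) ≤
        C * Real.log (Real.exp 1 + ‖x‖ + ‖y‖) / (1 + ‖x - y‖ ^ 2) := by
  refine ⟨2 * 133120, fun x y => ?_⟩
  set d := ‖x - y‖
  have hd : 0 ≤ d := norm_nonneg _
  have hdxy : d ≤ ‖x‖ + ‖y‖ := norm_sub_le x y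
  have hlog : 1 ≤ log (exp 1 + d) := one_le_log_exp_one_add hd
  have hlog' : log (exp 1 + d) ≤ log (exp 1 + ‖x‖ + ‖y‖) :=
    log_le_log (by positivity) (by linarith)
  have hsq : 1 + d ^ 2 ≤ (1 + d) ^ 2 := by nlinarith
  refine tsum_le_of_sum_le' (div_nonneg (by nlinarith) (by positivity)) fun s => ?_
  calc _ ≤ ∑ n ∈ s, (pairMajorant d ‖latt n - x‖ + pairMajorant d ‖latt n - y‖) :=
        sum_le_sum fun n _ => one_div_mul_le_pairMajorant_add (norm_nonneg _) (norm_nonneg _)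
          (norm_sub_le_norm_sub_add_norm_sub x (latt n) y |>.trans_eq (by rw [norm_sub_rev]))
    _ = ∑ n ∈ s, pairMajorant d ‖latt n - x‖ + ∑ n ∈ s, pairMajorant d ‖latt n - y‖ :=
        sum_add_distrib
    _ ≤ 133120 * log (exp 1 + d) / (1 + d) ^ 2 + 133120 * log (exp 1 + d) / (1 + d) ^ 2 :=
        add_le_add (sum_pairMajorant_norm_latt_sub_le hd s x)
          (sum_pairMajorant_norm_latt_sub_le hd s y)
    _ = 2 * 133120 * log (exp 1 + d) / (1 + d) ^ 2 := by ring
    _ ≤ 2 * 133120 * log (exp 1 + ‖x‖ + ‖y‖) / (1 + d ^ 2) := by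
        gcongr
        linarith
end

section
/- Covariance region estimate: there exists C such that for all x, y ∈ R^2 with |x| ≤ |y|, Σ_{n ∈ Z^2, |n| ≤ |x|/2} 1/((1+|x-n|)(1+|y-n|)(1+|n|)^2) ≤ C ln(e+|x|) / ((1+|x|)(1+|y|)). -/
open MeasureTheory Real Filter

/-!
For `|n| ≤ |x|/2` and `|x| ≤ |y|` both `1 + |x - n| ≥ (1 + |x|)/2` and `1 + |y - n| ≥ (1 + |y|)/2`, so the
sum is at most `4 / ((1 + |x|)(1 + |y|))` times `∑_{|n| ≤ |x|/2} (1 + |n|)⁻²`. Grouping lattice points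
by their sup norm `k`, each shell has at most `8(k + 1)` points, which bounds the latter sum by
`8 H_{⌊|x|/2⌋+1} = O(log (e + |x|))`.
-/

open Finset

section NormedGroup

variable {E : Type*} [SeminormedAddCommGroup E]

lemma one_add_norm_le_two_mul_one_add_norm_sub {x n : E} (hn : ‖n‖ ≤ ‖x‖ / 2) :
    1 + ‖x‖ ≤ 2 * (1 + ‖x - n‖) := by
  linarith [norm_sub_norm_le x n]

lemma one_div_mul_one_add_norm_sub_le {x y n : E} (hxy : ‖x‖ ≤ ‖y‖) (hn : ‖n‖ ≤ ‖x‖ / 2) :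
    1 / ((1 + ‖x - n‖) * (1 + ‖y - n‖) * (1 + ‖n‖) ^ 2) ≤
      4 / ((1 + ‖x‖) * (1 + ‖y‖)) * (1 / (1 + ‖n‖) ^ 2) := by
  have hx := one_add_norm_le_two_mul_one_add_norm_sub hn
  have hy := one_add_norm_le_two_mul_one_add_norm_sub (x := y) (hn.trans (by linarith))
  rw [div_mul_div_comm, mul_one, div_le_div_iff₀ (by positivity) (by positivity)]
  have hprod : (1 + ‖x‖) * (1 + ‖y‖) ≤ 4 * ((1 + ‖x - n‖) * (1 + ‖y - n‖)) := by
    nlinarith [norm_nonneg x, norm_nonneg (y - n)]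
  nlinarith [pow_pos (by positivity : (0 : ℝ) < 1 + ‖n‖) 2]

end NormedGroup

def supNormNat (n : ℤ × ℤ) : ℕ := max n.1.natAbs n.2.natAbs

lemma supNormNat_le_norm_latt (n : ℤ × ℤ) : (supNormNat n : ℝ) ≤ ‖latt n‖ := by
  have h1 : |(n.1 : ℝ)| ≤ ‖latt n‖ := by simpa [latt] using PiLp.norm_apply_le (latt n) 0
  have h2 : |(n.2 : ℝ)| ≤ ‖latt n‖ := by simpa [latt] using PiLp.norm_apply_le (latt n) 1
  simpa [supNormNat, Nat.cast_natAbs] using And.intro h1 h2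

noncomputable def latticeBox (N : ℕ) : Finset (ℤ × ℤ) := Icc (-(N : ℤ)) N ×ˢ Icc (-(N : ℤ)) N

lemma mem_latticeBox_iff {N : ℕ} {n : ℤ × ℤ} : n ∈ latticeBox N ↔ supNormNat n ≤ N := by
  simp only [latticeBox, supNormNat, mem_product, mem_Icc]
  omega

lemma mem_latticeBox_floor_of_norm_latt_le {R : ℝ} {n : ℤ × ℤ} (h : ‖latt n‖ ≤ R) :
    n ∈ latticeBox ⌊R⌋₊ :=
  mem_latticeBox_iff.2 (Nat.le_floor ((supNormNat_le_norm_latt n).trans h))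

lemma card_filter_supNormNat_eq_le (N k : ℕ) :
    #{n ∈ latticeBox N | supNormNat n = k} ≤ 8 * (k + 1) := by
  have hshell : ({n ∈ latticeBox N | supNormNat n = k} : Finset (ℤ × ℤ)) ⊆
      ({-(k : ℤ), (k : ℤ)} ×ˢ Icc (-(k : ℤ)) k) ∪ (Icc (-(k : ℤ)) k ×ˢ {-(k : ℤ), (k : ℤ)}) := by
    intro n hn
    rw [mem_filter, supNormNat] at hn
    simp only [mem_union, mem_product, mem_Icc, mem_insert, mem_singleton]
    omega
  have hpair : #({-(k : ℤ), (k : ℤ)} : Finset ℤ) ≤ 2 := card_le_two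
  have hside : #(Icc (-(k : ℤ)) k) = 2 * k + 1 := by rw [Int.card_Icc]; omega
  calc _ ≤ _ := card_le_card hshell
    _ ≤ _ := card_union_le _ _
    _ ≤ 8 * (k + 1) := by rw [card_product, card_product, hside]; nlinarith

lemma sum_latticeBox_one_div_one_add_supNormNat_sq_le (N : ℕ) :
    ∑ n ∈ latticeBox N, 1 / (1 + (supNormNat n : ℝ)) ^ 2 ≤ 8 * (harmonic (N + 1) : ℝ) := by
  have hmaps : ∀ n ∈ latticeBox N, supNormNat n ∈ range (N + 1) := fun n hn =>
    mem_range_succ_iff.2 (mem_latticeBox_iff.1 hn)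
  rw [← sum_fiberwise_of_maps_to hmaps]
  calc ∑ k ∈ range (N + 1), ∑ n ∈ latticeBox N with supNormNat n = k,
          1 / (1 + (supNormNat n : ℝ)) ^ 2
      = ∑ k ∈ range (N + 1), (#{n ∈ latticeBox N | supNormNat n = k} : ℝ) * (1 / (1 + k) ^ 2) := by
        refine sum_congr rfl fun k _ => ?_
        rw [sum_congr rfl fun n hn => by rw [(mem_filter.1 hn).2], sum_const, nsmul_eq_mul]
    _ ≤ ∑ k ∈ range (N + 1), (8 * (k + 1) : ℝ) * (1 / (1 + k) ^ 2) := by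
        gcongr with k
        exact_mod_cast card_filter_supNormNat_eq_le N k
    _ = 8 * (harmonic (N + 1) : ℝ) := by
        rw [harmonic, Rat.cast_sum, mul_sum]
        refine sum_congr rfl fun k _ => ?_
        push_cast
        field_simp
        ring

lemma harmonic_floor_succ_le_two_mul_log {R : ℝ} (hR : 0 ≤ R) :
    (harmonic (⌊R⌋₊ + 1) : ℝ) ≤ 2 * Real.log (Real.exp 1 + R) := by
  have hone : 1 ≤ Real.log (Real.exp 1 + R) := by
    rw [Real.le_log_iff_exp_le (by positivity)]
    linarith
  have hfloor : Real.log (⌊R⌋₊ + 1) ≤ Real.log (Real.exp 1 + R) :=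
    Real.log_le_log (by positivity) (by linarith [Nat.floor_le hR, Real.add_one_le_exp (1 : ℝ)])
  have := harmonic_le_one_add_log (⌊R⌋₊ + 1)
  push_cast at this
  linarith

lemma summable_ite_norm_latt_le (R : ℝ) (f : ℤ × ℤ → ℝ) :
    Summable fun n => if ‖latt n‖ ≤ R then f n else 0 :=
  summable_of_ne_finset_zero (s := latticeBox ⌊R⌋₊) fun _ hn =>
    if_neg fun h => hn (mem_latticeBox_floor_of_norm_latt_le h)

lemma tsum_ite_norm_latt_le_one_div_one_add_sq_le {R : ℝ} (hR : 0 ≤ R) :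
    ∑' n : ℤ × ℤ, (if ‖latt n‖ ≤ R then 1 / (1 + ‖latt n‖) ^ 2 else 0) ≤
      16 * Real.log (Real.exp 1 + R) := by
  rw [tsum_eq_sum (s := latticeBox ⌊R⌋₊) fun _ hn =>
    if_neg fun h => hn (mem_latticeBox_floor_of_norm_latt_le h)]
  calc _ ≤ ∑ n ∈ latticeBox ⌊R⌋₊, 1 / (1 + (supNormNat n : ℝ)) ^ 2 := by
        refine sum_le_sum fun n _ => ?_
        split_ifs
        · gcongr
          exact supNormNat_le_norm_latt n
        · positivity
    _ ≤ 8 * (harmonic (⌊R⌋₊ + 1) : ℝ) := sum_latticeBox_one_div_one_add_supNormNat_sq_le _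
    _ ≤ 16 * Real.log (Real.exp 1 + R) := by linarith [harmonic_floor_succ_le_two_mul_log hR]

theorem covariance_region_A1_estimate :
    ∃ C : ℝ, ∀ x y : E2, ‖x‖ ≤ ‖y‖ →
      (∑' n : ℤ × ℤ,
          if ‖latt n‖ ≤ ‖x‖ / 2 then
            1 / ((1 + ‖x - latt n‖) * (1 + ‖y - latt n‖) * (1 + ‖latt n‖) ^ 2)
          else 0) ≤
        C * Real.log (Real.exp 1 + ‖x‖) / ((1 + ‖x‖) * (1 + ‖y‖)) := by
  refine ⟨64, fun x y hxy => ?_⟩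
  set D := (1 + ‖x‖) * (1 + ‖y‖)
  calc _ ≤ ∑' n : ℤ × ℤ, 4 / D * (if ‖latt n‖ ≤ ‖x‖ / 2 then 1 / (1 + ‖latt n‖) ^ 2 else 0) := by
        refine Summable.tsum_le_tsum (fun n => ?_) (summable_ite_norm_latt_le _ _)
          ((summable_ite_norm_latt_le _ _).mul_left _)
        split_ifs with hn
        · exact one_div_mul_one_add_norm_sub_le hxy hn
        · simp
    _ = 4 / D * ∑' n : ℤ × ℤ, (if ‖latt n‖ ≤ ‖x‖ / 2 then 1 / (1 + ‖latt n‖) ^ 2 else 0) :=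
        tsum_mul_left
    _ ≤ 4 / D * (16 * Real.log (Real.exp 1 + ‖x‖)) := by
        gcongr
        refine (tsum_ite_norm_latt_le_one_div_one_add_sq_le (by positivity)).trans ?_
        gcongr
        linarith [norm_nonneg x]
    _ = 64 * Real.log (Real.exp 1 + ‖x‖) / D := by ring
end
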